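/- A residuated lattice A is weakly disjunctive if and only if every filter of A is an α-filter, if and only if every prime filter of A is an α-filter. -/

import Mathlib

/-- A (bounded, integral, commutative) residuated lattice. -/
class ResLattice (A : Type*) extends Lattice A, CommMonoid A, OrderBot A where
  himp : A → A → A
  adjunction : ∀ x y z : A, x * y ≤ z ↔ x ≤ himp y z
  le_one : ∀ x : A, x ≤ 1

variable {A : Type*} [ResLattice A]

/-- Coannihilator of a subset: `X^⊥ = {a | a ⊔ x = 1 for all x ∈ X}`. -/
def Coann (X : Set A) : Set A := {a | ∀ x ∈ X, a ⊔ x = 1}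

/-- Coannulet of an element: `x^⊥`. -/
def rperp (x : A) : Set A := Coann {x}

/-- The principal filter generated by `x`. -/
def PFil (x : A) : Set A := {a | ∃ n : ℕ, 0 < n ∧ x ^ n ≤ a}

/-- Filters of a residuated lattice. -/
def IsRLFilter (F : Set A) : Prop :=
  F.Nonempty ∧ (∀ x ∈ F, ∀ y ∈ F, x * y ∈ F) ∧ (∀ x ∈ F, ∀ y : A, x ⊔ y ∈ F)

/-- Prime filters. -/
def IsRLPrime (P : Set A) : Prop :=
  IsRLFilter P ∧ P ≠ Set.univ ∧ ∀ x y : A, x ⊔ y ∈ P → x ∈ P ∨ y ∈ P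

/-- Minimal prime filters. -/
def IsRLMinPrime (P : Set A) : Prop :=
  IsRLPrime P ∧ ∀ Q : Set A, IsRLPrime Q → Q ⊆ P → Q = P

/-- Quasicomplemented residuated lattice. -/
def Quasicomplemented (A : Type*) [ResLattice A] : Prop :=
  ∀ x : A, ∃ y : A, Coann (rperp x) = rperp y

/-- α-filters. -/
def IsAlphaFilter (F : Set A) : Prop :=
  IsRLFilter F ∧ ∀ x ∈ F, Coann (rperp x) ⊆ F

/-- The α-filter generated by a subset. -/
def alphaGen (X : Set A) : Set A := ⋂₀ {G : Set A | IsAlphaFilter G ∧ X ⊆ G}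

/-!
If `A` is weakly disjunctive and `a ∈ x^⊥⊥`, then `x^⊥ ⊆ a^⊥`, so `(x * a)^⊥ = x^⊥ ∩ a^⊥ = x^⊥`
and hence `a ∈ F(x * a) = F(x)`: every filter containing `x` contains `x^⊥⊥`.
Conversely, `F(x)` is the intersection of the prime filters containing `x`: by Zorn a filter
maximal among those avoiding `y` is prime, because `(a ⊔ b)^(m * n) ≤ a^n ⊔ b^m`. So if
`x^⊥ = y^⊥` and all prime filters are α-filters, every prime filter containing `x` contains
`x^⊥⊥ = y^⊥⊥ ∋ y`, whence `y ∈ F(x)`, and symmetrically.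
-/

namespace ResLattice

instance isOrderedMonoid : IsOrderedMonoid A where
  mul_le_mul_left a b hab c :=
    (adjunction a c (b * c)).2 (hab.trans ((adjunction b c (b * c)).1 le_rfl))

lemma mul_le_left (a b : A) : a * b ≤ a := mul_le_of_le_one_right' (le_one b)

lemma mul_le_right (a b : A) : a * b ≤ b := mul_le_of_le_one_left' (le_one a)

protected lemma mul_sup (a b c : A) : a * (b ⊔ c) = a * b ⊔ a * c := by
  refine le_antisymm ?_ (sup_le (mul_le_mul_right le_sup_left a) (mul_le_mul_right le_sup_right a))
  rw [mul_comm, adjunction]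
  refine sup_le ?_ ?_ <;> rw [← adjunction, mul_comm]
  exacts [le_sup_left, le_sup_right]

lemma sup_mul_sup_le (s u v : A) : (s ⊔ u) * (s ⊔ v) ≤ s ⊔ u * v := by
  rw [ResLattice.mul_sup, mul_comm (s ⊔ u) v, ResLattice.mul_sup, mul_comm v u]
  exact sup_le ((mul_le_right _ _).trans le_sup_left)
    (sup_le_sup_right (mul_le_right v s) _)

lemma sup_pow_le (s u : A) (n : ℕ) : (s ⊔ u) ^ n ≤ s ⊔ u ^ n := by
  induction n with
  | zero => simp [le_one]
  | succ k ih =>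
    calc (s ⊔ u) ^ (k + 1) ≤ (s ⊔ u ^ k) * (s ⊔ u) := by rw [pow_succ]; exact mul_le_mul_left ih _
    _ ≤ s ⊔ u ^ (k + 1) := by rw [pow_succ]; exact sup_mul_sup_le s _ u

lemma sup_pow_mul_le (a b : A) (m n : ℕ) : (a ⊔ b) ^ (m * n) ≤ a ^ n ⊔ b ^ m :=
  calc (a ⊔ b) ^ (m * n) = ((a ⊔ b) ^ m) ^ n := pow_mul _ _ _
  _ ≤ (b ^ m ⊔ a) ^ n := sup_comm a (b ^ m) ▸ pow_le_pow_left' (sup_pow_le a b m) n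
  _ ≤ b ^ m ⊔ a ^ n := sup_pow_le _ _ _
  _ = a ^ n ⊔ b ^ m := sup_comm _ _

end ResLattice

open ResLattice

namespace IsRLFilter

variable {F : Set A}

lemma mul_mem (hF : IsRLFilter F) {x y : A} (hx : x ∈ F) (hy : y ∈ F) : x * y ∈ F :=
  hF.2.1 x hx y hy

lemma mem_of_le (hF : IsRLFilter F) {x a : A} (hx : x ∈ F) (h : x ≤ a) : a ∈ F :=
  sup_eq_right.2 h ▸ hF.2.2 x hx a

lemma one_mem (hF : IsRLFilter F) : (1 : A) ∈ F :=
  let ⟨x, hx⟩ := hF.1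
  hF.mem_of_le hx (le_one x)

lemma pow_mem (hF : IsRLFilter F) {x : A} (hx : x ∈ F) (n : ℕ) : x ^ n ∈ F := by
  induction n with
  | zero => simpa using hF.one_mem
  | succ k ih => rw [pow_succ]; exact hF.mul_mem ih hx

lemma PFil_subset (hF : IsRLFilter F) {x : A} (hx : x ∈ F) : PFil x ⊆ F :=
  fun _ ⟨n, _, hn⟩ => hF.mem_of_le (hF.pow_mem hx n) hn

lemma sUnion_of_isChain {c : Set (Set A)} (hc : ∀ G ∈ c, IsRLFilter G)
    (hchain : IsChain (· ⊆ ·) c) (hne : c.Nonempty) : IsRLFilter (⋃₀ c) := by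
  refine ⟨?_, ?_, ?_⟩
  · obtain ⟨G, hG⟩ := hne
    obtain ⟨g, hg⟩ := (hc G hG).1
    exact ⟨g, G, hG, hg⟩
  · rintro u ⟨G₁, hG₁, hu⟩ v ⟨G₂, hG₂, hv⟩
    rcases hchain.total hG₁ hG₂ with h | h
    · exact ⟨G₂, hG₂, (hc G₂ hG₂).mul_mem (h hu) hv⟩
    · exact ⟨G₁, hG₁, (hc G₁ hG₁).mul_mem hu (h hv)⟩
  · rintro u ⟨G, hG, hu⟩ v
    exact ⟨G, hG, (hc G hG).2.2 u hu v⟩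

end IsRLFilter

lemma self_mem_PFil (x : A) : x ∈ PFil x := ⟨1, one_pos, by simp⟩

lemma isRLFilter_PFil (x : A) : IsRLFilter (PFil x) := by
  refine ⟨⟨x, self_mem_PFil x⟩, ?_, ?_⟩
  · rintro a ⟨n, hn, ha⟩ b ⟨m, -, hb⟩
    exact ⟨n + m, by omega, pow_add x n m ▸ mul_le_mul' ha hb⟩
  · rintro a ⟨n, hn, ha⟩ y
    exact ⟨n, hn, ha.trans le_sup_left⟩

/-- The filter generated by `P ∪ {c}` when `P` is a filter. -/
def filterInsert (P : Set A) (c : A) : Set A := {z | ∃ p ∈ P, ∃ n : ℕ, p * c ^ n ≤ z}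

section filterInsert

variable {P : Set A}

lemma subset_filterInsert (c : A) : P ⊆ filterInsert P c :=
  fun p hp => ⟨p, hp, 0, by simp⟩

lemma mem_filterInsert_self (hP : IsRLFilter P) (c : A) : c ∈ filterInsert P c :=
  ⟨1, hP.one_mem, 1, by simp⟩

lemma IsRLFilter.filterInsert (hP : IsRLFilter P) (c : A) : IsRLFilter (filterInsert P c) := by
  refine ⟨⟨c, mem_filterInsert_self hP c⟩, ?_, ?_⟩
  · rintro u ⟨p, hp, n, hu⟩ v ⟨q, hq, m, hv⟩
    refine ⟨p * q, hP.mul_mem hp hq, n + m, ?_⟩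
    calc p * q * c ^ (n + m) = p * c ^ n * (q * c ^ m) := by rw [pow_add, mul_mul_mul_comm]
    _ ≤ u * v := mul_le_mul' hu hv
  · rintro u ⟨p, hp, n, hu⟩ v
    exact ⟨p, hp, n, hu.trans le_sup_left⟩

end filterInsert

lemma IsRLFilter.isRLPrime_of_maximal {P : Set A} (hP : IsRLFilter P) {y : A} (hy : y ∉ P)
    (hmax : ∀ G, IsRLFilter G → P ⊆ G → y ∉ G → G ⊆ P) : IsRLPrime P := by
  refine ⟨hP, fun h => hy (h ▸ trivial), fun a b hab => ?_⟩
  by_contra! hne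
  have escape : ∀ c ∉ P, ∃ p ∈ P, ∃ n : ℕ, p * c ^ n ≤ y := fun c hc => by
    by_contra hyG
    exact hc (hmax _ (hP.filterInsert c) (subset_filterInsert c) hyG (mem_filterInsert_self hP c))
  obtain ⟨p, hp, n, hpn⟩ := escape a hne.1
  obtain ⟨q, hq, m, hqm⟩ := escape b hne.2
  refine hy (hP.mem_of_le (hP.mul_mem (hP.mul_mem hp hq) (hP.pow_mem hab (m * n))) ?_)
  calc p * q * (a ⊔ b) ^ (m * n) ≤ p * q * (a ^ n ⊔ b ^ m) :=
        mul_le_mul_right (sup_pow_mul_le a b m n) _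
  _ = p * q * a ^ n ⊔ p * q * b ^ m := ResLattice.mul_sup _ _ _
  _ ≤ p * a ^ n ⊔ q * b ^ m :=
        sup_le_sup (mul_le_mul_left (mul_le_left p q) _) (mul_le_mul_left (mul_le_right p q) _)
  _ ≤ y := sup_le hpn hqm

lemma IsRLFilter.exists_isRLPrime {F : Set A} (hF : IsRLFilter F) {y : A} (hy : y ∉ F) :
    ∃ P, IsRLPrime P ∧ F ⊆ P ∧ y ∉ P := by
  let S := {G : Set A | IsRLFilter G ∧ F ⊆ G ∧ y ∉ G}
  have hS : ∀ c ⊆ S, IsChain (· ⊆ ·) c → c.Nonempty → ∃ ub ∈ S, ∀ G ∈ c, G ⊆ ub := by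
    rintro c hcS hchain ⟨G, hG⟩
    refine ⟨⋃₀ c, ⟨.sUnion_of_isChain (fun G hG => (hcS hG).1) hchain ⟨G, hG⟩,
      (hcS hG).2.1.trans (Set.subset_sUnion_of_mem hG), ?_⟩, fun _ => Set.subset_sUnion_of_mem⟩
    rintro ⟨G', hG', hyG'⟩
    exact (hcS hG').2.2 hyG'
  obtain ⟨P, hFP, ⟨hP, -, hyP⟩, hmax⟩ := zorn_subset_nonempty S hS F ⟨hF, subset_rfl, hy⟩
  exact ⟨P, hP.isRLPrime_of_maximal hyP
    fun G hG hPG hyG => hmax ⟨hG, hFP.trans hPG, hyG⟩ hPG, hFP, hyP⟩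

lemma mem_PFil_of_forall_isRLPrime {x y : A} (h : ∀ P, IsRLPrime P → x ∈ P → y ∈ P) :
    y ∈ PFil x := by
  by_contra hy
  obtain ⟨P, hP, hxP, hyP⟩ := (isRLFilter_PFil x).exists_isRLPrime hy
  exact hyP (h P hP (hxP (self_mem_PFil x)))

lemma mem_rperp {x b : A} : b ∈ rperp x ↔ b ⊔ x = 1 := by
  simp [rperp, Coann]

lemma mem_coann_rperp {x a : A} : a ∈ Coann (rperp x) ↔ rperp x ⊆ rperp a := by
  simp [Coann, Set.subset_def, mem_rperp, sup_comm a]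

lemma self_mem_coann_rperp (x : A) : x ∈ Coann (rperp x) :=
  mem_coann_rperp.2 subset_rfl

lemma rperp_mul (x a : A) : rperp (x * a) = rperp x ∩ rperp a := by
  ext b
  simp only [mem_rperp, Set.mem_inter_iff]
  refine ⟨fun h => ⟨?_, ?_⟩, fun ⟨hx, ha⟩ => ?_⟩
  · exact le_antisymm (le_one _) (h ▸ sup_le_sup_left (mul_le_left x a) b)
  · exact le_antisymm (le_one _) (h ▸ sup_le_sup_left (mul_le_right x a) b)
  · refine le_antisymm (le_one _) ?_
    calc (1 : A) = (b ⊔ x) * (b ⊔ a) := by rw [hx, ha, one_mul]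
    _ ≤ b ⊔ x * a := sup_mul_sup_le b x a

variable (A) in
def WeaklyDisjunctive : Prop := ∀ x y : A, rperp x = rperp y → PFil x = PFil y

lemma WeaklyDisjunctive.coann_rperp_subset_PFil (h : WeaklyDisjunctive A) (x : A) :
    Coann (rperp x) ⊆ PFil x := by
  intro a ha
  have hxa : rperp (x * a) = rperp x := by
    rw [rperp_mul, Set.inter_eq_self_of_subset_left (mem_coann_rperp.1 ha)]
  exact (isRLFilter_PFil x).mem_of_le (h _ _ hxa ▸ self_mem_PFil (x * a)) (mul_le_right x a)

lemma WeaklyDisjunctive.isAlphaFilter (h : WeaklyDisjunctive A) {F : Set A} (hF : IsRLFilter F) :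
    IsAlphaFilter F :=
  ⟨hF, fun x hx => (h.coann_rperp_subset_PFil x).trans (hF.PFil_subset hx)⟩

lemma weaklyDisjunctive_of_forall_isRLPrime_isAlphaFilter
    (h : ∀ P : Set A, IsRLPrime P → IsAlphaFilter P) : WeaklyDisjunctive A := by
  have hmem : ∀ x y : A, rperp x = rperp y → y ∈ PFil x := fun x y hxy =>
    mem_PFil_of_forall_isRLPrime fun P hP hxP =>
      (h P hP).2 x hxP (hxy ▸ self_mem_coann_rperp y)
  exact fun x y hxy => (isRLFilter_PFil y).PFil_subset (hmem y x hxy.symm) |>.antisymm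
    ((isRLFilter_PFil x).PFil_subset (hmem x y hxy))

theorem stmt15 :
    ((∀ x y : A, rperp x = rperp y → PFil x = PFil y) ↔
      (∀ F : Set A, IsRLFilter F → IsAlphaFilter F)) ∧
    ((∀ F : Set A, IsRLFilter F → IsAlphaFilter F) ↔
      (∀ P : Set A, IsRLPrime P → IsAlphaFilter P)) := by
  have wd_alpha : WeaklyDisjunctive A → ∀ F : Set A, IsRLFilter F → IsAlphaFilter F :=
    fun h _ hF => h.isAlphaFilter hF
  have alpha_prime : (∀ F : Set A, IsRLFilter F → IsAlphaFilter F) →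
      ∀ P : Set A, IsRLPrime P → IsAlphaFilter P :=
    fun h P hP => h P hP.1
  have prime_wd : (∀ P : Set A, IsRLPrime P → IsAlphaFilter P) → WeaklyDisjunctive A :=
    weaklyDisjunctive_of_forall_isRLPrime_isAlphaFilter
  exact ⟨⟨wd_alpha, prime_wd ∘ alpha_prime⟩, ⟨alpha_prime, wd_alpha ∘ prime_wd⟩⟩
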